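/- arXiv:1403.5556 — 4 statements merged into one kernel-verified Lean document; each statement's English description precedes it below -/
import Mathlib

section
/- Let Δ_t, g_t : {1,...,T} → ℝ≥0 be random sequences adapted to a filtration, with Δ_t² ≤ λ g_t almost surely for a constant λ ≥ 0, and E[Σ_{t=1}^T g_t] ≤ H for a constant H ≥ 0. Then E[Σ_{t=1}^T Δ_t] ≤ sqrt(λ H T). -/
/-!
Pointwise, Cauchy–Schwarz turns `Δ_t ≤ √(λ g_t)` into `∑ Δ_t ≤ √(λ T) · √(∑ g_t)`; Jensen's
inequality for the concave square root then gives `E √(∑ g_t) ≤ √(E ∑ g_t) ≤ √H`.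
-/

open MeasureTheory Finset

theorem Finset.sum_le_sqrt_mul_card_mul_sum {ι : Type*} (s : Finset ι) {a b : ι → ℝ} {lam : ℝ}
    (hab : ∀ i ∈ s, a i ^ 2 ≤ lam * b i) :
    ∑ i ∈ s, a i ≤ √(lam * #s * ∑ i ∈ s, b i) := by
  refine Real.le_sqrt_of_sq_le ?_
  calc (∑ i ∈ s, a i) ^ 2 ≤ #s * ∑ i ∈ s, a i ^ 2 := sq_sum_le_card_mul_sum_sq
    _ ≤ #s * ∑ i ∈ s, lam * b i := by gcongr with i hi; exact hab i hi
    _ = lam * #s * ∑ i ∈ s, b i := by rw [← mul_sum]; ring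

namespace MeasureTheory

variable {Ω : Type*} [MeasurableSpace Ω] {μ : Measure Ω} {f : Ω → ℝ}

theorem Integrable.sqrt_of_nonneg [IsFiniteMeasure μ] (hf0 : 0 ≤ᵐ[μ] f)
    (hf : Integrable f μ) : Integrable (fun ω => √(f ω)) μ := by
  have hmeas : AEStronglyMeasurable (fun ω => √(f ω)) μ :=
    Real.continuous_sqrt.comp_aestronglyMeasurable hf.1
  have hL2 : MemLp (fun ω => √(f ω)) 2 μ := by
    rw [memLp_two_iff_integrable_sq hmeas]
    refine hf.congr ?_
    filter_upwards [hf0] with ω hω using (Real.sq_sqrt hω).symm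
  exact hL2.integrable one_le_two

theorem integral_sqrt_le_sqrt_integral [IsProbabilityMeasure μ] (hf0 : 0 ≤ᵐ[μ] f)
    (hf : Integrable f μ) : ∫ ω, √(f ω) ∂μ ≤ √(∫ ω, f ω ∂μ) :=
  Real.strictConcaveOn_sqrt.concaveOn.le_map_integral Real.continuous_sqrt.continuousOn
    isClosed_Ici hf0 hf (hf.sqrt_of_nonneg hf0)

end MeasureTheory

theorem general_regret_bound_general {Ω : Type*} [MeasurableSpace Ω]
    (μ : Measure Ω) [IsProbabilityMeasure μ] (T : ℕ) (lam H : ℝ)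
    (Δ g : ℕ → Ω → ℝ)
    (hΔ : ∀ t ω, 0 ≤ Δ t ω) (hg : ∀ t ω, 0 ≤ g t ω)
    (hgint : ∀ t, Integrable (g t) μ)
    (hratio : ∀ᵐ ω ∂μ, ∀ t ∈ Finset.range T, (Δ t ω) ^ 2 ≤ lam * g t ω)
    (hinfo : ∫ ω, ∑ t ∈ Finset.range T, g t ω ∂μ ≤ H) :
    ∫ ω, ∑ t ∈ Finset.range T, Δ t ω ∂μ ≤ Real.sqrt (lam * H * T) := by
  set S : Ω → ℝ := fun ω => ∑ t ∈ range T, g t ω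
  have hS0 : 0 ≤ᵐ[μ] S := .of_forall fun ω => sum_nonneg fun t _ => hg t ω
  have hSint : Integrable S μ := integrable_finsetSum _ fun t _ => hgint t
  have hH : 0 ≤ H := (integral_nonneg_of_ae hS0).trans hinfo
  have hpointwise :
      (fun ω => ∑ t ∈ range T, Δ t ω) ≤ᵐ[μ] fun ω => √(lam * T) * √(S ω) := by
    filter_upwards [hratio, hS0] with ω hratio_ω hS0_ω
    rw [← Real.sqrt_mul' _ hS0_ω]
    simpa only [card_range] using (range T).sum_le_sqrt_mul_card_mul_sum hratio_ω
  calc ∫ ω, ∑ t ∈ range T, Δ t ω ∂μ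
      ≤ ∫ ω, √(lam * T) * √(S ω) ∂μ :=
        integral_mono_of_nonneg (.of_forall fun ω => sum_nonneg fun t _ => hΔ t ω)
          ((hSint.sqrt_of_nonneg hS0).const_mul _) hpointwise
    _ = √(lam * T) * ∫ ω, √(S ω) ∂μ := integral_const_mul _ _
    _ ≤ √(lam * T) * √(∫ ω, S ω ∂μ) := by
        gcongr; exact integral_sqrt_le_sqrt_integral hS0 hSint
    _ ≤ √(lam * T) * √H := by gcongr
    _ = √(lam * H * T) := by rw [← Real.sqrt_mul' _ hH, mul_right_comm]

theorem general_regret_bound {Ω : Type*} [MeasurableSpace Ω]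
    (μ : Measure Ω) [IsProbabilityMeasure μ] (T : ℕ) (lam H : ℝ)
    (hlam : 0 ≤ lam) (hH : 0 ≤ H)
    (Δ g : ℕ → Ω → ℝ)
    (hΔ : ∀ t ω, 0 ≤ Δ t ω) (hg : ∀ t ω, 0 ≤ g t ω)
    (hΔint : ∀ t, Integrable (Δ t) μ) (hgint : ∀ t, Integrable (g t) μ)
    (hratio : ∀ᵐ ω ∂μ, ∀ t ∈ Finset.range T, (Δ t ω) ^ 2 ≤ lam * g t ω)
    (hinfo : ∫ ω, ∑ t ∈ Finset.range T, g t ω ∂μ ≤ H) :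
    ∫ ω, ∑ t ∈ Finset.range T, Δ t ω ∂μ ≤ Real.sqrt (lam * H * T) :=
  general_regret_bound_general μ T lam H Δ g hΔ hg hgint hratio hinfo
end

section
/- Let Δ_t, g_t, Ψ*_t be random sequences with Δ_t² = Ψ*_t g_t, Ψ*_t ≥ 0, g_t ≥ 0, and E[Σ_{t=1}^T g_t] ≤ H. Then E[Σ_{t=1}^T Δ_t] ≤ sqrt((1/T) E[Σ_{t=1}^T Ψ*_t] · H · T). -/
/-!
Pointwise, `Δ_t ≤ |Δ_t| = √Ψ*_t √g_t`, so the finite Cauchy–Schwarz inequality bounds `Σ_t Δ_t` by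
`√(Σ_t Ψ*_t) √(Σ_t g_t)`. Taking expectations and applying Cauchy–Schwarz once more, now in `L²(μ)`,
gives `E[Σ_t Δ_t] ≤ √(E[Σ_t Ψ*_t]) √(E[Σ_t g_t]) ≤ √(E[Σ_t Ψ*_t] H)`.
-/

open MeasureTheory

lemma Real.sum_le_sqrt_mul_sqrt_of_sq_eq_mul {ι : Type*} (s : Finset ι) {d a b : ι → ℝ}
    (ha : ∀ i, 0 ≤ a i) (hb : ∀ i, 0 ≤ b i) (hd : ∀ i, d i ^ 2 = a i * b i) :
    ∑ i ∈ s, d i ≤ √(∑ i ∈ s, a i) * √(∑ i ∈ s, b i) := by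
  refine le_trans (Finset.sum_le_sum fun i _ => ?_) (Real.sum_sqrt_mul_sqrt_le s ha hb)
  calc d i ≤ |d i| := le_abs_self _
    _ = √(a i * b i) := by rw [← hd, Real.sqrt_sq_eq_abs]
    _ = √(a i) * √(b i) := Real.sqrt_mul (ha i) _

section Sqrt

variable {Ω : Type*} [MeasurableSpace Ω] {μ : Measure Ω} {f g : Ω → ℝ}

lemma MeasureTheory.Integrable.memLp_two_sqrt (hf : Integrable f μ) (hf0 : 0 ≤ᵐ[μ] f) :
    MemLp (fun ω => √(f ω)) 2 μ := by
  refine (memLp_two_iff_integrable_sq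
    (Real.continuous_sqrt.comp_aestronglyMeasurable hf.aestronglyMeasurable)).2 (hf.congr ?_)
  filter_upwards [hf0] with ω hω
  exact (Real.sq_sqrt hω).symm

lemma MeasureTheory.Integrable.sqrt_mul_sqrt (hf : Integrable f μ) (hg : Integrable g μ)
    (hf0 : 0 ≤ᵐ[μ] f) (hg0 : 0 ≤ᵐ[μ] g) : Integrable (fun ω => √(f ω) * √(g ω)) μ :=
  (hf.memLp_two_sqrt hf0).integrable_mul (hg.memLp_two_sqrt hg0)

lemma MeasureTheory.integral_sqrt_mul_sqrt_le (hf : Integrable f μ) (hg : Integrable g μ)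
    (hf0 : 0 ≤ᵐ[μ] f) (hg0 : 0 ≤ᵐ[μ] g) :
    ∫ ω, √(f ω) * √(g ω) ∂μ ≤ √(∫ ω, f ω ∂μ) * √(∫ ω, g ω ∂μ) := by
  have sqrt_rpow_two : ∀ {h : Ω → ℝ}, 0 ≤ᵐ[μ] h → ∫ ω, √(h ω) ^ (2 : ℝ) ∂μ = ∫ ω, h ω ∂μ :=
    fun hh0 => integral_congr_ae <| by
      filter_upwards [hh0] with ω hω
      rw [Real.rpow_two, Real.sq_sqrt hω]
  have holder := integral_mul_le_Lp_mul_Lq_of_nonneg Real.HolderConjugate.two_two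
    (ae_of_all μ fun ω => Real.sqrt_nonneg (f ω)) (ae_of_all μ fun ω => Real.sqrt_nonneg (g ω))
    (by simpa using hf.memLp_two_sqrt hf0) (by simpa using hg.memLp_two_sqrt hg0)
  rwa [sqrt_rpow_two hf0, sqrt_rpow_two hg0, ← Real.sqrt_eq_rpow, ← Real.sqrt_eq_rpow] at holder

end Sqrt

theorem regret_bound_average_info_ratio_general {Ω : Type*} [MeasurableSpace Ω]
    (μ : Measure Ω) (T : ℕ) (hT : 0 < T) (H : ℝ)
    (Δ g Ψ : ℕ → Ω → ℝ)
    (hΨ : ∀ t ω, 0 ≤ Ψ t ω) (hg : ∀ t ω, 0 ≤ g t ω)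
    (hΔint : ∀ t, Integrable (Δ t) μ) (hgint : ∀ t, Integrable (g t) μ)
    (hΨint : ∀ t, Integrable (Ψ t) μ)
    (hratio : ∀ t ω, (Δ t ω) ^ 2 = Ψ t ω * g t ω)
    (hinfo : ∫ ω, ∑ t ∈ Finset.range T, g t ω ∂μ ≤ H) :
    ∫ ω, ∑ t ∈ Finset.range T, Δ t ω ∂μ ≤
      Real.sqrt ((1 / T) * (∫ ω, ∑ t ∈ Finset.range T, Ψ t ω ∂μ) * H * T) := by
  have hΨsum := integrable_finsetSum (Finset.range T) fun t _ => hΨint t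
  have hgsum := integrable_finsetSum (Finset.range T) fun t _ => hgint t
  have hΨsum0 : 0 ≤ᵐ[μ] fun ω => ∑ t ∈ Finset.range T, Ψ t ω :=
    ae_of_all μ fun ω => Finset.sum_nonneg fun t _ => hΨ t ω
  have hgsum0 : 0 ≤ᵐ[μ] fun ω => ∑ t ∈ Finset.range T, g t ω :=
    ae_of_all μ fun ω => Finset.sum_nonneg fun t _ => hg t ω
  have hT' : (T : ℝ) ≠ 0 := Nat.cast_ne_zero.2 hT.ne'
  calc ∫ ω, ∑ t ∈ Finset.range T, Δ t ω ∂μ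
      ≤ ∫ ω, √(∑ t ∈ Finset.range T, Ψ t ω) * √(∑ t ∈ Finset.range T, g t ω) ∂μ :=
        integral_mono (integrable_finsetSum _ fun t _ => hΔint t)
          (hΨsum.sqrt_mul_sqrt hgsum hΨsum0 hgsum0) fun ω =>
          Real.sum_le_sqrt_mul_sqrt_of_sq_eq_mul _ (hΨ · ω) (hg · ω) (hratio · ω)
    _ ≤ √(∫ ω, ∑ t ∈ Finset.range T, Ψ t ω ∂μ) * √(∫ ω, ∑ t ∈ Finset.range T, g t ω ∂μ) :=
        integral_sqrt_mul_sqrt_le hΨsum hgsum hΨsum0 hgsum0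
    _ ≤ √(∫ ω, ∑ t ∈ Finset.range T, Ψ t ω ∂μ) * √H := by gcongr
    _ = _ := by rw [← Real.sqrt_mul (integral_nonneg_of_ae hΨsum0)]; field_simp

theorem regret_bound_average_info_ratio {Ω : Type*} [MeasurableSpace Ω]
    (μ : Measure Ω) [IsProbabilityMeasure μ] (T : ℕ) (hT : 0 < T) (H : ℝ) (hH : 0 ≤ H)
    (Δ g Ψ : ℕ → Ω → ℝ)
    (hΨ : ∀ t ω, 0 ≤ Ψ t ω) (hg : ∀ t ω, 0 ≤ g t ω)
    (hΔint : ∀ t, Integrable (Δ t) μ) (hgint : ∀ t, Integrable (g t) μ)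
    (hΨint : ∀ t, Integrable (Ψ t) μ)
    (hratio : ∀ t ω, (Δ t ω) ^ 2 = Ψ t ω * g t ω)
    (hinfo : ∫ ω, ∑ t ∈ Finset.range T, g t ω ∂μ ≤ H) :
    ∫ ω, ∑ t ∈ Finset.range T, Δ t ω ∂μ ≤
      Real.sqrt ((1 / T) * (∫ ω, ∑ t ∈ Finset.range T, Ψ t ω ∂μ) * H * T) :=
  regret_bound_average_info_ratio_general μ T hT H Δ g Ψ hΨ hg hΔint hgint hΨint hratio hinfo
end

section
/- Let λ ≥ 0 and suppose sequences m_t ≥ 0 (minimal single-period regret), Ψ*_t ≤ λ, g_t ≥ 0 satisfy m_t ≤ sqrt(Ψ*_t · G_t) almost surely where G_t = max over actions of information gain, and E[Σ_{t=1}^T G_t] ≤ H. If additionally E[m_T] ≤ (1/T) E[Σ_{t=1}^T m_t], then E[m_T] ≤ sqrt(λ H / T). -/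
/-! Pathwise, Cauchy–Schwarz gives `∑ₜ mₜ ≤ √(λ ∑ₜ Gₜ) · √T`. Taking expectations and applying
Jensen to the concave square root bounds `E[∑ₜ mₜ]` by `√(λ H) · √T`, and the hypothesis on `m_T`
divides this by `T`. -/

open MeasureTheory

theorem MeasureTheory.Integrable.sqrt {Ω : Type*} [MeasurableSpace Ω] {μ : Measure Ω}
    [IsFiniteMeasure μ] {f : Ω → ℝ} (hf : Integrable f μ) (hf₀ : 0 ≤ᵐ[μ] f) :
    Integrable (fun ω ↦ √(f ω)) μ := by
  have hmeas : AEStronglyMeasurable (fun ω ↦ √(f ω)) μ :=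
    Real.continuous_sqrt.comp_aestronglyMeasurable hf.aestronglyMeasurable
  refine MemLp.integrable one_le_two ((memLp_two_iff_integrable_sq hmeas).2 ?_)
  refine hf.congr ?_
  filter_upwards [hf₀] with ω hω
  exact (Real.sq_sqrt hω).symm

theorem integral_sqrt_le_sqrt_integral {Ω : Type*} [MeasurableSpace Ω] {μ : Measure Ω}
    [IsProbabilityMeasure μ] {f : Ω → ℝ} (hf : Integrable f μ) (hf₀ : 0 ≤ᵐ[μ] f) :
    ∫ ω, √(f ω) ∂μ ≤ √(∫ ω, f ω ∂μ) :=
  Real.strictConcaveOn_sqrt.concaveOn.le_map_integral Real.continuous_sqrt.continuousOn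
    isClosed_Ici hf₀ hf (hf.sqrt hf₀)

theorem Finset.sum_le_sqrt_sum_mul_sqrt_card {ι : Type*} {s : Finset ι} {a b : ι → ℝ}
    (hb : ∀ i, 0 ≤ b i) (hab : ∀ i ∈ s, a i ≤ √(b i)) :
    ∑ i ∈ s, a i ≤ √(∑ i ∈ s, b i) * √(s.card : ℝ) :=
  calc ∑ i ∈ s, a i ≤ ∑ i ∈ s, √(b i) * √1 := by simpa using Finset.sum_le_sum hab
    _ ≤ √(∑ i ∈ s, b i) * √(∑ _i ∈ s, (1 : ℝ)) :=
      Real.sum_sqrt_mul_sqrt_le s hb fun _ ↦ zero_le_one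
    _ = √(∑ i ∈ s, b i) * √(s.card : ℝ) := by simp

theorem pure_exploration_bound_general {Ω : Type*} [MeasurableSpace Ω]
    (μ : Measure Ω) [IsProbabilityMeasure μ] (T : ℕ)
    (lam H : ℝ) (hlam : 0 ≤ lam)
    (m G Ψ : ℕ → Ω → ℝ)
    (hG : ∀ t ω, 0 ≤ G t ω)
    (hΨlam : ∀ t ω, Ψ t ω ≤ lam)
    (hmint : ∀ t, Integrable (m t) μ) (hGint : ∀ t, Integrable (G t) μ)
    (hchain : ∀ᵐ ω ∂μ, ∀ t ∈ Finset.range T, m t ω ≤ Real.sqrt (Ψ t ω * G t ω))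
    (hinfo : ∫ ω, ∑ t ∈ Finset.range T, G t ω ∂μ ≤ H)
    (hterm : ∫ ω, m T ω ∂μ ≤ (1 / T) * ∫ ω, ∑ t ∈ Finset.range T, m t ω ∂μ) :
    ∫ ω, m T ω ∂μ ≤ Real.sqrt (lam * H / T) := by
  set info : Ω → ℝ := fun ω ↦ lam * ∑ t ∈ Finset.range T, G t ω
  have hinfo_int : Integrable info μ :=
    (integrable_finsetSum _ fun t _ ↦ hGint t).const_mul lam
  have hinfo_nonneg : 0 ≤ᵐ[μ] info := .of_forall fun ω ↦
    mul_nonneg hlam (Finset.sum_nonneg fun t _ ↦ hG t ω)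
  have hpathwise : ∀ᵐ ω ∂μ, ∑ t ∈ Finset.range T, m t ω ≤ √(info ω) * √T := by
    filter_upwards [hchain] with ω hω
    simpa [info, Finset.mul_sum] using Finset.sum_le_sqrt_sum_mul_sqrt_card
      (fun t ↦ mul_nonneg hlam (hG t ω)) fun t ht ↦ (hω t ht).trans <|
        Real.sqrt_le_sqrt (mul_le_mul_of_nonneg_right (hΨlam t ω) (hG t ω))
  calc ∫ ω, m T ω ∂μ
      ≤ (1 / T) * ∫ ω, ∑ t ∈ Finset.range T, m t ω ∂μ := hterm
    _ ≤ (1 / T) * ((∫ ω, √(info ω) ∂μ) * √T) := by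
        gcongr
        rw [← integral_mul_const]
        exact integral_mono_ae (integrable_finsetSum _ fun t _ ↦ hmint t)
          ((hinfo_int.sqrt hinfo_nonneg).mul_const _) hpathwise
    _ ≤ (1 / T) * (√(lam * H) * √T) := by
        gcongr
        refine (integral_sqrt_le_sqrt_integral hinfo_int hinfo_nonneg).trans ?_
        gcongr
        rw [integral_const_mul]
        gcongr
    _ = √(lam * H / T) := by
        rw [Real.sqrt_div' _ (Nat.cast_nonneg T), mul_comm, mul_assoc, ← div_eq_mul_one_div,
          Real.sqrt_div_self', mul_one_div]

theorem pure_exploration_bound {Ω : Type*} [MeasurableSpace Ω]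
    (μ : Measure Ω) [IsProbabilityMeasure μ] (T : ℕ) (hT : 0 < T)
    (lam H : ℝ) (hlam : 0 ≤ lam) (hH : 0 ≤ H)
    (m G Ψ : ℕ → Ω → ℝ)
    (hm : ∀ t ω, 0 ≤ m t ω) (hG : ∀ t ω, 0 ≤ G t ω)
    (hΨlam : ∀ t ω, Ψ t ω ≤ lam)
    (hmint : ∀ t, Integrable (m t) μ) (hGint : ∀ t, Integrable (G t) μ)
    (hchain : ∀ᵐ ω ∂μ, ∀ t ∈ Finset.range T, m t ω ≤ Real.sqrt (Ψ t ω * G t ω))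
    (hinfo : ∫ ω, ∑ t ∈ Finset.range T, G t ω ∂μ ≤ H)
    (hterm : ∫ ω, m T ω ∂μ ≤ (1 / T) * ∫ ω, ∑ t ∈ Finset.range T, m t ω ∂μ) :
    ∫ ω, m T ω ∂μ ≤ Real.sqrt (lam * H / T) :=
  pure_exploration_bound_general μ T lam H hlam m G Ψ hG hΨlam hmint hGint hchain hinfo hterm
end

section
/- In the sparse linear bandit example with d = 2^m actions: for Thompson sampling, the information ratio satisfies Ψ₁(π^TS) = ((d−1)²/d²) / (log(d)/d + ((d−1)/d)·log(d/(d−1))), and this quantity is asymptotically equivalent to d/log(d) as d → ∞ (their ratio tends to 1). -/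
/-! The denominator is `log d / d + ((d - 1) / d) · log (d / (d - 1))`, and
`d · log (d / (d - 1)) = -d · log (1 - 1 / d) → 1`, so after multiplying by `d / log d` it becomes
`1 + O(1 / log d) → 1`, while the numerator `((d - 1) / d)²` tends to `1`. -/

open Filter Real Topology

lemma tendsto_sub_one_div_self_atTop : Tendsto (fun x : ℝ => (x - 1) / x) atTop (𝓝 1) := by
  have h : Tendsto (fun x : ℝ => 1 - x⁻¹) atTop (𝓝 (1 - 0)) :=
    tendsto_inv_atTop_zero.const_sub 1
  rw [sub_zero] at h
  refine h.congr' ?_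
  filter_upwards [eventually_ne_atTop 0] with x hx
  field_simp

lemma tendsto_mul_log_div_sub_one_atTop :
    Tendsto (fun x : ℝ => x * log (x / (x - 1))) atTop (𝓝 1) := by
  have h := (tendsto_mul_log_one_add_div_atTop (-1)).neg
  rw [neg_neg] at h
  refine h.congr' ?_
  filter_upwards [eventually_gt_atTop 1] with x hx
  have hx1 : x - 1 ≠ 0 := by linarith
  have hinv : 1 + -1 / x = (x / (x - 1))⁻¹ := by field_simp; ring
  rw [hinv, log_inv, mul_neg, neg_neg]

lemma info_ratio_div_eq {x : ℝ} (hx : 1 < x) :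
    ((x - 1) ^ 2 / x ^ 2) / (log x / x + ((x - 1) / x) * log (x / (x - 1))) / (x / log x) =
      ((x - 1) / x) ^ 2 / (1 + x * log (x / (x - 1)) * ((x - 1) / x) / log x) := by
  have hlog : 0 < log x := log_pos hx
  field_simp

lemma tendsto_info_ratio_div_atTop :
    Tendsto (fun x : ℝ =>
      ((x - 1) ^ 2 / x ^ 2) / (log x / x + ((x - 1) / x) * log (x / (x - 1))) / (x / log x))
      atTop (𝓝 1) := by
  have hcorr : Tendsto (fun x : ℝ => x * log (x / (x - 1)) * ((x - 1) / x) / log x)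
      atTop (𝓝 0) :=
    (tendsto_mul_log_div_sub_one_atTop.mul tendsto_sub_one_div_self_atTop).div_atTop
      tendsto_log_atTop
  have hlim := (tendsto_sub_one_div_self_atTop.pow 2).div (hcorr.const_add 1) (by norm_num)
  rw [one_pow, add_zero, div_one] at hlim
  refine hlim.congr' ?_
  filter_upwards [eventually_gt_atTop 1] with x hx
  exact (info_ratio_div_eq hx).symm

theorem ts_info_ratio_asymptotics :
    Tendsto (fun d : ℕ =>
        ((((d : ℝ) - 1) ^ 2 / (d : ℝ) ^ 2) /
            (Real.log d / d + (((d : ℝ) - 1) / d) * Real.log ((d : ℝ) / ((d : ℝ) - 1)))) /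
          ((d : ℝ) / Real.log d))
      atTop (nhds 1) :=
  tendsto_info_ratio_div_atTop.comp tendsto_natCast_atTop_atTop
end
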